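/- Assume the Setup with M ≥ 2, N ≥ 4M, and the strict separation condition |θ_{k+1} − θ_k|_T > 3/N for all k, and let ε satisfy 0 < ε ≤ (τ − σ)/2 − M·d_N/2. Let p̂ : {0,…,N−1} → ℝ (extended periodically in the index modulo N) be any function such that p̂_j ≥ τ/M − ε/M for every j with p_j ≥ τ/M, and p̂_j < σ/M + ε/M + d_N for every j with |θ_k − a_j|_T > 1/N for all k. Define Ĉ = {a_j : p̂_j ≥ τ/M − ε/M, 0 ≤ j ≤ N−1}. Then: (0) C ⊆ Ĉ ⊆ ⋃_{k=0}^{M−1} I_k; (1) Ĉ ∩ I_k ≠ ∅ for every k = 0,…,M−1; (2) if a_{j−1}, a_j, a_{j+1} ∈ Ĉ then there exists k with θ_k = a_j (as points of ℝ/ℤ), and a_{j−2} ∉ Ĉ and a_{j+2} ∉ Ĉ; (3) if a_j, a_{j+1} ∈ Ĉ and a_{j−1}, a_{j+2} ∉ Ĉ, then there exists k with θ_k in the closed forward torus arc [a_j, a_{j+1}]_T of length 1/N; (4) if a_j ∈ Ĉ and a_{j−1}, a_{j+1} ∉ Ĉ, then there exists k with |θ_k − a_j|_T ≤ 1/(2N).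 -/

import Mathlib

open scoped BigOperators

open Classical in
/-- The Fejér kernel: `F_n(x) = n` if `x ∈ 2πℤ`, else `(1/n)·sin²(nx/2)/sin²(x/2)`. -/
noncomputable def fejer (n : ℕ) (x : ℝ) : ℝ :=
  if ∃ k : ℤ, x = 2 * Real.pi * (k : ℝ) then (n : ℝ)
  else (1 / (n : ℝ)) * (Real.sin ((n : ℝ) * x / 2)) ^ 2 / (Real.sin (x / 2)) ^ 2

/-- The normalized Fejér kernel `F̃_N = F_N / N`. -/
noncomputable def fejerN (n : ℕ) (x : ℝ) : ℝ := fejer n x / (n : ℝ)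

/-- Distance on the torus `ℝ/ℤ`: `|x − y|_T = min_{k ∈ ℤ} |x − y − k|`. -/
noncomputable def distT (x y : ℝ) : ℝ := sInf {d : ℝ | ∃ k : ℤ, d = |x - y - (k : ℝ)|}

/-- State-averaged QPE output probability `p_j`. -/
noncomputable def pdist (M N : ℕ) (θ : ℕ → ℝ) (j : ℤ) : ℝ :=
  (1 / (M : ℝ)) * ∑ k ∈ Finset.range M, fejerN N (2 * Real.pi * (θ k - (j : ℝ) / (N : ℝ)))

noncomputable def tauC : ℝ := 4 / Real.pi ^ 2

noncomputable def sigmaC : ℝ := (2 / Real.pi ^ 2) * ∑' l : ℕ, (1 : ℝ) / (3 * (l : ℝ) + 1) ^ 2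

noncomputable def dC (N : ℕ) : ℝ := (1 - 4 / Real.pi ^ 2) / (N : ℝ) ^ 2

noncomputable def gammaC : ℝ :=
  1 + (1 / Real.pi ^ 2) * (Real.pi ^ 2 / 6 - ∑' l : ℕ, (1 : ℝ) / (3 * (l : ℝ) + 1) ^ 2)

lemma distT_bdd (x y : ℝ) : BddBelow {d : ℝ | ∃ k : ℤ, d = |x - y - (k : ℝ)|} := by
  refine ⟨0, ?_⟩
  rintro d ⟨k, rfl⟩; exact abs_nonneg _

lemma distT_le (x y : ℝ) (m : ℤ) : distT x y ≤ |x - y - (m : ℝ)| :=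
  csInf_le (distT_bdd x y) ⟨m, rfl⟩

lemma distT_eq (x y : ℝ) : distT x y = |x - y - (round (x - y) : ℝ)| := by
  refine le_antisymm (distT_le x y _) (le_csInf ⟨_, ⟨0, rfl⟩⟩ ?_)
  rintro d ⟨k, rfl⟩
  exact round_le (x - y) k

lemma distT_nonneg (x y : ℝ) : 0 ≤ distT x y := by rw [distT_eq]; exact abs_nonneg _

lemma lt_distT {x y c : ℝ} (h : ∀ m : ℤ, c < |x - y - (m : ℝ)|) : c < distT x y := by
  rw [distT_eq]; exact h _

lemma distT_symm (x y : ℝ) : distT x y = distT y x := by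
  have h : ∀ a b : ℝ, distT a b ≤ distT b a := by
    intro a b
    rw [distT_eq b a]
    have h1 : a - b - ((-(round (b - a)) : ℤ) : ℝ) = -(b - a - (round (b - a) : ℝ)) := by
      push_cast; ring
    calc distT a b ≤ |a - b - ((-(round (b - a)) : ℤ) : ℝ)| := distT_le a b _
      _ = |b - a - (round (b - a) : ℝ)| := by rw [h1, abs_neg]
  exact le_antisymm (h x y) (h y x)

lemma distT_triangle (x y z : ℝ) : distT x z ≤ distT x y + distT y z := by
  rw [distT_eq x y, distT_eq y z]
  have h1 : x - z - (((round (x - y) + round (y - z) : ℤ)) : ℝ)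
      = (x - y - (round (x - y) : ℝ)) + (y - z - (round (y - z) : ℝ)) := by push_cast; ring
  calc distT x z ≤ |x - z - (((round (x - y) + round (y - z) : ℤ)) : ℝ)| := distT_le _ _ _
    _ ≤ _ := by rw [h1]; exact abs_add_le _ _

lemma fejer_nonneg (n : ℕ) (x : ℝ) : 0 ≤ fejer n x := by
  unfold fejer; split
  · positivity
  · positivity

lemma fejerN_nonneg (n : ℕ) (x : ℝ) : 0 ≤ fejerN n x :=
  div_nonneg (fejer_nonneg n x) (Nat.cast_nonneg n)

lemma sin_sq_add_int_mul_pi (x : ℝ) (m : ℤ) :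
    Real.sin (x + (m : ℝ) * Real.pi) ^ 2 = Real.sin x ^ 2 := by
  rw [Real.sin_add_int_mul_pi, mul_pow]
  have h1 : ((-1 : ℝ) ^ m) ^ 2 = 1 := by
    rw [sq, ← zpow_add₀ (by norm_num : (-1 : ℝ) ≠ 0)]
    exact Even.neg_one_zpow ⟨m, rfl⟩
  rw [h1, one_mul]

lemma fejer_add_int (n : ℕ) (x : ℝ) (m : ℤ) : fejer n (x + 2 * Real.pi * (m : ℝ)) = fejer n x := by
  unfold fejer
  have hiff : (∃ k : ℤ, x + 2 * Real.pi * (m : ℝ) = 2 * Real.pi * (k : ℝ)) ↔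
      (∃ k : ℤ, x = 2 * Real.pi * (k : ℝ)) := by
    constructor
    · rintro ⟨k, hk⟩; exact ⟨k - m, by push_cast; linarith⟩
    · rintro ⟨k, hk⟩; exact ⟨k + m, by push_cast; linarith⟩
  by_cases h : ∃ k : ℤ, x = 2 * Real.pi * (k : ℝ)
  · rw [if_pos (hiff.mpr h), if_pos h]
  · rw [if_neg (fun hh => h (hiff.mp hh)), if_neg h]
    have e1 : (n : ℝ) * (x + 2 * Real.pi * (m : ℝ)) / 2 = (n : ℝ) * x / 2 + ((n * m : ℤ) : ℝ) * Real.pi := by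
      push_cast; ring
    have e2 : (x + 2 * Real.pi * (m : ℝ)) / 2 = x / 2 + (m : ℝ) * Real.pi := by ring
    rw [e1, e2, sin_sq_add_int_mul_pi, sin_sq_add_int_mul_pi]

lemma fejerN_add_int (n : ℕ) (x : ℝ) (m : ℤ) : fejerN n (x + 2 * Real.pi * (m : ℝ)) = fejerN n x := by
  unfold fejerN; rw [fejer_add_int]

lemma fejerN_ge {N : ℕ} (hN : 0 < N) {δ : ℝ} (hδ : |δ| ≤ 1 / (2 * (N : ℝ))) :
    tauC ≤ fejerN N (2 * Real.pi * δ) := by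
  have hπ := Real.pi_pos
  have hN0 : (0 : ℝ) < N := Nat.cast_pos.mpr hN
  have hN1 : (1 : ℝ) ≤ N := Nat.one_le_cast.mpr hN
  have hπ4 : (4 : ℝ) ≤ Real.pi ^ 2 := by nlinarith [Real.pi_gt_three]
  have hδ12 : |δ| ≤ 1 / 2 := by
    calc |δ| ≤ 1 / (2 * (N : ℝ)) := hδ
      _ ≤ 1 / 2 := by rw [div_le_div_iff₀ (by positivity) (by norm_num)]; linarith
  have hint : ∀ k : ℤ, δ = (k : ℝ) → δ = 0 := by
    intro k hk
    have h1 : |(k : ℝ)| < 1 := by rw [← hk]; linarith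
    have h2 : (k : ℤ) = 0 := by
      obtain ⟨ha, hb⟩ := abs_lt.mp h1
      have ha' : (-1 : ℤ) < k := by exact_mod_cast ha
      have hb' : k < 1 := by exact_mod_cast hb
      omega
    rw [hk, h2]; norm_num
  by_cases h0 : δ = 0
  · subst h0
    have hf : fejer N (2 * Real.pi * 0) = N := by
      unfold fejer; rw [if_pos ⟨0, by norm_num⟩]
    unfold fejerN
    rw [hf, div_self (ne_of_gt hN0)]
    unfold tauC
    rw [div_le_one (by positivity)]; linarith
  · have hnot : ¬ ∃ k : ℤ, 2 * Real.pi * δ = 2 * Real.pi * (k : ℝ) := by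
      rintro ⟨k, hk⟩
      exact h0 (hint k (mul_left_cancel₀ (by positivity) hk))
    set s := Real.sin (Real.pi * ((N : ℝ) * δ)) with hs
    set c := Real.sin (Real.pi * δ) with hc
    have hcne : c ≠ 0 := by
      rw [hc]
      apply Real.sin_ne_zero_iff.mpr
      intro n hn
      apply h0
      apply hint n
      have := mul_comm (n : ℝ) Real.pi ▸ hn
      exact (mul_left_cancel₀ (ne_of_gt hπ) this).symm
    have hF : fejerN N (2 * Real.pi * δ) = s ^ 2 / ((N : ℝ) ^ 2 * c ^ 2) := by
      unfold fejerN fejer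
      rw [if_neg hnot]
      rw [show (N : ℝ) * (2 * Real.pi * δ) / 2 = Real.pi * ((N : ℝ) * δ) by ring,
        show (2 * Real.pi * δ) / 2 = Real.pi * δ by ring, ← hs, ← hc]
      rw [div_div, one_div_mul_eq_div, div_div,
        show (N : ℝ) * (c ^ 2 * (N : ℝ)) = (N : ℝ) ^ 2 * c ^ 2 by ring]
    have hc2 : c ^ 2 ≤ Real.pi ^ 2 * δ ^ 2 := by
      have h1 : |c| ≤ |Real.pi * δ| := Real.abs_sin_le_abs
      have := pow_le_pow_left₀ (abs_nonneg c) h1 2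
      rw [sq_abs, sq_abs] at this
      nlinarith [this]
    have hc2pos : 0 < c ^ 2 := (sq_nonneg c).lt_of_ne (Ne.symm (pow_ne_zero 2 hcne))
    have hs2 : 4 * (N : ℝ) ^ 2 * δ ^ 2 ≤ s ^ 2 := by
      have habs : s ^ 2 = Real.sin (Real.pi * ((N : ℝ) * |δ|)) ^ 2 := by
        rcases abs_cases δ with ⟨h, _⟩ | ⟨h, _⟩
        · rw [h]
        · rw [h, show Real.pi * ((N : ℝ) * (-δ)) = -(Real.pi * ((N : ℝ) * δ)) by ring,
            Real.sin_neg, hs]; ring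
      have ht2 : Real.pi * ((N : ℝ) * |δ|) ≤ Real.pi / 2 := by
        have : (N : ℝ) * |δ| ≤ 1 / 2 := by
          calc (N : ℝ) * |δ| ≤ (N : ℝ) * (1 / (2 * (N : ℝ))) :=
            mul_le_mul_of_nonneg_left hδ (le_of_lt hN0)
            _ = 1 / 2 := by field_simp
        nlinarith
      have hj := Real.mul_le_sin (show 0 ≤ Real.pi * ((N : ℝ) * |δ|) by positivity) ht2
      have hj2 : 2 * (N : ℝ) * |δ| ≤ Real.sin (Real.pi * ((N : ℝ) * |δ|)) := by
        have hππ : Real.pi / Real.pi = 1 := div_self (ne_of_gt hπ)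
        have heq : 2 / Real.pi * (Real.pi * ((N : ℝ) * |δ|))
            = 2 * (N : ℝ) * |δ| * (Real.pi / Real.pi) := by ring
        rw [heq, hππ, mul_one] at hj
        exact hj
      have := pow_le_pow_left₀ (by positivity : (0:ℝ) ≤ 2 * (N : ℝ) * |δ|) hj2 2
      rw [habs]
      calc 4 * (N : ℝ) ^ 2 * δ ^ 2 = (2 * (N : ℝ) * |δ|) ^ 2 := by rw [mul_pow, mul_pow, sq_abs]; ring
        _ ≤ _ := this
    rw [hF]
    unfold tauC
    rw [div_le_div_iff₀ (by positivity) (by positivity)]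
    nlinarith [mul_le_mul_of_nonneg_left hc2 (by positivity : (0:ℝ) ≤ 4 * (N : ℝ) ^ 2),
      mul_le_mul_of_nonneg_left hs2 (by positivity : (0:ℝ) ≤ Real.pi ^ 2)]

lemma pdist_ge {M N : ℕ} (hM : 0 < M) (hN : 0 < N) (θ : ℕ → ℝ) (j : ℤ) {k : ℕ} (hk : k < M)
    (h : distT (θ k) ((j : ℝ) / (N : ℝ)) ≤ 1 / (2 * (N : ℝ))) : tauC / (M : ℝ) ≤ pdist M N θ j := by
  have hM0 : (0 : ℝ) < M := Nat.cast_pos.mpr hM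
  set a := (j : ℝ) / (N : ℝ) with ha
  set r := round (θ k - a) with hr
  have hδ : |θ k - a - (r : ℝ)| ≤ 1 / (2 * (N : ℝ)) := by rw [← distT_eq]; exact h
  have hterm : tauC ≤ fejerN N (2 * Real.pi * (θ k - a)) := by
    rw [show 2 * Real.pi * (θ k - a) = 2 * Real.pi * (θ k - a - (r : ℝ)) + 2 * Real.pi * (r : ℝ)
      by ring, fejerN_add_int]
    exact fejerN_ge hN hδ
  have hsum : fejerN N (2 * Real.pi * (θ k - a)) ≤
      ∑ i ∈ Finset.range M, fejerN N (2 * Real.pi * (θ i - a)) :=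
    Finset.single_le_sum (f := fun i => fejerN N (2 * Real.pi * (θ i - a)))
      (fun i _ => fejerN_nonneg N _) (Finset.mem_range.mpr hk)
  unfold pdist
  rw [← ha]
  calc tauC / (M : ℝ) = (1 / (M : ℝ)) * tauC := by ring
    _ ≤ _ := mul_le_mul_of_nonneg_left (le_trans hterm hsum) (by positivity)

set_option maxHeartbeats 1600000 in
/-- peak detection from samples.  Let `p̂` be any (`N`-periodic)
empirical-type function that is above the test threshold `τ/M − ε/M` on every
true peak bin and strictly below `σ/M + ε/M + d_N` on every off-peak bin, and
let `Ĉ = {a_j : p̂_j ≥ τ/M − ε/M}`.  Then (0) `C ⊆ Ĉ ⊆ ⋃ₖ I_k`; (1) `Ĉ` meets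
every `I_k`; (2) three consecutive detected points pinpoint the eigenphase
exactly and the next outer points are undetected; (3) two consecutive detected
points flanked by undetected ones bracket an eigenphase; (4) an isolated
detected point is within `1/(2N)` of an eigenphase. -/
theorem peak_detection_from_samples
    (M N : ℕ) (hM : 2 ≤ M) (hN : 4 * M ≤ N)
    (θ : ℕ → ℝ)
    (hθ01 : ∀ k, k < M → θ k ∈ Set.Ico (0 : ℝ) 1)
    (hθmono : ∀ k, k + 1 < M → θ k < θ (k + 1))
    (hθper : ∀ k, θ (k + M) = θ k)
    (hsep : ∀ k, (3 : ℝ) / (N : ℝ) < distT (θ (k + 1)) (θ k))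
    (ε : ℝ) (hε0 : 0 < ε)
    (hε1 : ε ≤ (tauC - sigmaC) / 2 - (M : ℝ) * dC N / 2)
    (phat : ℤ → ℝ)
    (hper : ∀ j : ℤ, phat (j + (N : ℤ)) = phat j)
    (hC : ∀ j : ℤ, tauC / (M : ℝ) ≤ pdist M N θ j →
      tauC / (M : ℝ) - ε / (M : ℝ) ≤ phat j)
    (hD : ∀ j : ℤ, (∀ k, k < M → (1 : ℝ) / (N : ℝ) < distT (θ k) ((j : ℝ) / (N : ℝ))) →
      phat j < sigmaC / (M : ℝ) + ε / (M : ℝ) + dC N) :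
    -- (0) C ⊆ Ĉ ⊆ ⋃ₖ I_k
    ((∀ j : ℤ, tauC / (M : ℝ) ≤ pdist M N θ j →
        tauC / (M : ℝ) - ε / (M : ℝ) ≤ phat j) ∧
     (∀ j : ℤ, tauC / (M : ℝ) - ε / (M : ℝ) ≤ phat j →
        ∃ k : ℕ, k < M ∧ distT (θ k) ((j : ℝ) / (N : ℝ)) ≤ 1 / (N : ℝ))) ∧
    -- (1) Ĉ ∩ I_k ≠ ∅ for every k
    (∀ k : ℕ, k < M → ∃ j : ℤ, 0 ≤ j ∧ j ≤ (N : ℤ) - 1 ∧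
        tauC / (M : ℝ) - ε / (M : ℝ) ≤ phat j ∧
        distT ((j : ℝ) / (N : ℝ)) (θ k) ≤ 1 / (N : ℝ)) ∧
    -- (2) three consecutive detections
    (∀ j : ℤ,
        tauC / (M : ℝ) - ε / (M : ℝ) ≤ phat (j - 1) →
        tauC / (M : ℝ) - ε / (M : ℝ) ≤ phat j →
        tauC / (M : ℝ) - ε / (M : ℝ) ≤ phat (j + 1) →
        (∃ k : ℕ, k < M ∧ ∃ m : ℤ, θ k = (j : ℝ) / (N : ℝ) + (m : ℝ)) ∧
        phat (j - 2) < tauC / (M : ℝ) - ε / (M : ℝ) ∧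
        phat (j + 2) < tauC / (M : ℝ) - ε / (M : ℝ)) ∧
    -- (3) two consecutive detections flanked by non-detections
    (∀ j : ℤ,
        tauC / (M : ℝ) - ε / (M : ℝ) ≤ phat j →
        tauC / (M : ℝ) - ε / (M : ℝ) ≤ phat (j + 1) →
        phat (j - 1) < tauC / (M : ℝ) - ε / (M : ℝ) →
        phat (j + 2) < tauC / (M : ℝ) - ε / (M : ℝ) →
        ∃ k : ℕ, k < M ∧ ∃ m : ℤ,
          θ k + (m : ℝ) ∈ Set.Icc ((j : ℝ) / (N : ℝ)) (((j : ℝ) + 1) / (N : ℝ))) ∧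
    -- (4) isolated detection
    (∀ j : ℤ,
        tauC / (M : ℝ) - ε / (M : ℝ) ≤ phat j →
        phat (j - 1) < tauC / (M : ℝ) - ε / (M : ℝ) →
        phat (j + 1) < tauC / (M : ℝ) - ε / (M : ℝ) →
        ∃ k : ℕ, k < M ∧ distT (θ k) ((j : ℝ) / (N : ℝ)) ≤ 1 / (2 * (N : ℝ))) := by
  have hπ := Real.pi_pos
  have hMpos : 0 < M := by omega
  have hNpos : 0 < N := by omega
  have hM0 : (0 : ℝ) < M := Nat.cast_pos.mpr hMpos
  have hN0 : (0 : ℝ) < N := Nat.cast_pos.mpr hNpos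
  have hN8 : (8 : ℝ) ≤ (N : ℝ) := by exact_mod_cast (show 8 ≤ N by omega)
  have h3N1 : 3 / (N : ℝ) < 1 := by rw [div_lt_one hN0]; linarith
  have h2N : 1 / (2 * (N : ℝ)) ≤ 1 / (N : ℝ) := by
    rw [div_le_div_iff₀ (by positivity) hN0]; linarith
  have h1N0 : (0 : ℝ) < 1 / (N : ℝ) := by positivity
  have h18 : 1 / (N : ℝ) ≤ 1 / 8 := by rw [div_le_div_iff₀ hN0 (by norm_num)]; linarith
  have h28 : 2 / (N : ℝ) ≤ 1 / 4 := by rw [div_le_div_iff₀ hN0 (by norm_num)]; linarith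
  have h4N : 4 / (N : ℝ) ≤ 1 / 2 := by rw [div_le_div_iff₀ hN0 (by norm_num)]; linarith
  -- threshold comparison
  have hthr : sigmaC / (M : ℝ) + ε / (M : ℝ) + dC N ≤ tauC / (M : ℝ) - ε / (M : ℝ) := by
    have h2 : sigmaC + 2 * ε + (M : ℝ) * dC N ≤ tauC := by linarith
    have h3 : (sigmaC + 2 * ε + (M : ℝ) * dC N) / (M : ℝ) ≤ tauC / (M : ℝ) := by gcongr
    have h4 : (sigmaC + 2 * ε + (M : ℝ) * dC N) / (M : ℝ)
        = sigmaC / (M : ℝ) + 2 * (ε / (M : ℝ)) + dC N := by field_simp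
    linarith
  -- strict monotonicity on [0, M)
  have hmono : ∀ k l, k < l → l < M → θ k < θ l := by
    intro k l hkl hlM
    induction l with
    | zero => omega
    | succ n ih =>
      rcases Nat.lt_succ_iff_lt_or_eq.mp hkl with h | h
      · exact lt_trans (ih h (by omega)) (hθmono n hlM)
      · subst h; exact hθmono k hlM
  have hmono' : ∀ k l, k ≤ l → l < M → θ k ≤ θ l := by
    intro k l hkl hlM
    rcases eq_or_lt_of_le hkl with h | h
    · rw [h]
    · exact le_of_lt (hmono k l h hlM)
  -- pairwise separation
  have hpairlt : ∀ k l, k < l → l < M → 3 / (N : ℝ) < distT (θ k) (θ l) := by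
    intro k l hkl hlM
    have hd1 : 3 / (N : ℝ) < θ l - θ k := by
      have h3 : θ k ≤ θ (k + 1) := hmono' k (k + 1) (by omega) (by omega)
      have h2 := distT_le (θ (k + 1)) (θ k) 0
      rw [show ((0 : ℤ) : ℝ) = 0 by norm_num, sub_zero, abs_of_nonneg (by linarith)] at h2
      have h4 : θ (k + 1) ≤ θ l := hmono' (k + 1) l (by omega) hlM
      linarith [hsep k]
    have hd2 : 3 / (N : ℝ) < 1 - (θ l - θ k) := by
      have hθM : θ (M - 1 + 1) = θ 0 := by
        rw [show M - 1 + 1 = M by omega, show M = 0 + M by omega, hθper 0]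
      have h6 : θ (M - 1) - θ 0 < 1 := by
        have ha := (hθ01 (M - 1) (by omega)).2
        have hb := (hθ01 0 (by omega)).1
        linarith
      have h7 : θ 0 ≤ θ (M - 1) := hmono' 0 (M - 1) (by omega) (by omega)
      have h5 := distT_le (θ 0) (θ (M - 1)) (-1)
      rw [show ((-1 : ℤ) : ℝ) = -1 by norm_num,
        abs_of_nonneg (by linarith : (0:ℝ) ≤ θ 0 - θ (M - 1) - (-1))] at h5
      have h8 := hsep (M - 1)
      rw [hθM] at h8
      have h9 : θ l ≤ θ (M - 1) := hmono' l (M - 1) (by omega) (by omega)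
      have h10 : θ 0 ≤ θ k := hmono' 0 k (by omega) (by omega)
      linarith
    have hd0 : 0 < θ l - θ k := lt_trans (by positivity) hd1
    refine lt_distT (fun m => ?_)
    rcases (by omega : m ≤ -1 ∨ m = 0 ∨ 1 ≤ m) with h | h | h
    · have hc : (m : ℝ) ≤ -1 := by exact_mod_cast h
      linarith [le_abs_self (θ k - θ l - (m : ℝ))]
    · simp only [h, Int.cast_zero, sub_zero]
      linarith [neg_le_abs (θ k - θ l)]
    · have hc : (1 : ℝ) ≤ (m : ℝ) := by exact_mod_cast h
      linarith [neg_le_abs (θ k - θ l - (m : ℝ))]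
  have hpair : ∀ k l, k < M → l < M → k ≠ l → 3 / (N : ℝ) < distT (θ k) (θ l) := by
    intro k l hk hl hne
    rcases lt_or_gt_of_ne hne with h | h
    · exact hpairlt k l h hl
    · rw [distT_symm]; exact hpairlt l k h hk
  -- detection implies near a peak
  have hdet : ∀ j : ℤ, tauC / (M : ℝ) - ε / (M : ℝ) ≤ phat j →
      ∃ k : ℕ, k < M ∧ distT (θ k) ((j : ℝ) / (N : ℝ)) ≤ 1 / (N : ℝ) := by
    intro j hj
    by_contra hcon
    push_neg at hcon
    have := hD j hcon
    linarith
  -- grid step bound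
  have hstep1 : ∀ j1 j2 : ℤ, j2 = j1 + 1 →
      distT ((j1 : ℝ) / (N : ℝ)) ((j2 : ℝ) / (N : ℝ)) ≤ 1 / (N : ℝ) := by
    intro j1 j2 hj
    have h := distT_le ((j1 : ℝ) / (N : ℝ)) ((j2 : ℝ) / (N : ℝ)) 0
    have e : (j1 : ℝ) / (N : ℝ) - (j2 : ℝ) / (N : ℝ) - ((0 : ℤ) : ℝ) = -(1 / (N : ℝ)) := by
      subst hj; push_cast; ring
    rw [e, abs_neg, abs_of_pos h1N0] at h
    exact h
  -- same-peak from nearby detections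
  have hsame : ∀ (a b : ℝ) (k1 k2 : ℕ), k1 < M → k2 < M →
      distT (θ k1) a ≤ 1 / (N : ℝ) → distT (θ k2) b ≤ 1 / (N : ℝ) →
      distT a b ≤ 1 / (N : ℝ) → k1 = k2 := by
    intro a b k1 k2 hk1 hk2 h1 h2 h3
    by_contra hne
    have hp := hpair k1 k2 hk1 hk2 hne
    have t1 := distT_triangle (θ k1) a (θ k2)
    have t2 := distT_triangle a b (θ k2)
    have e1 : distT b (θ k2) = distT (θ k2) b := distT_symm _ _
    rw [e1] at t2
    have h3n : 3 / (N : ℝ) = 1 / (N : ℝ) + 1 / (N : ℝ) + 1 / (N : ℝ) := by ring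
    linarith
  -- a point exactly 2/N away in the torus is > 1/N away
  have haux : ∀ (x y : ℝ) (mm : ℤ), |x - y - (mm : ℝ)| = 2 / (N : ℝ) →
      1 / (N : ℝ) < distT x y := by
    intro x y mm hmm
    refine lt_distT (fun m => ?_)
    obtain ⟨hA, hB⟩ := abs_le.mp (le_of_eq hmm)
    rcases (by omega : m ≤ mm - 1 ∨ m = mm ∨ mm + 1 ≤ m) with h | h | h
    · have hc : (m : ℝ) ≤ (mm : ℝ) - 1 := by exact_mod_cast h
      linarith [le_abs_self (x - y - (m : ℝ))]
    · rw [h, hmm]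
      rw [div_lt_div_iff₀ hN0 hN0]; nlinarith
    · have hc : (mm : ℝ) + 1 ≤ (m : ℝ) := by exact_mod_cast h
      linarith [neg_le_abs (x - y - (m : ℝ))]
  refine ⟨⟨hC, hdet⟩, ?_, ?_, ?_, ?_⟩
  · -- part (1)
    intro k hk
    obtain ⟨h0k, h1k⟩ := hθ01 k hk
    set j0 := round ((N : ℝ) * θ k) with hj0def
    have hround : |(N : ℝ) * θ k - (j0 : ℝ)| ≤ 1 / 2 := abs_sub_round _
    obtain ⟨hra, hrb⟩ := abs_le.mp hround
    have hj0nonneg : 0 ≤ j0 := by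
      have h1 : (-1 : ℝ) < (j0 : ℝ) := by nlinarith [mul_nonneg (le_of_lt hN0) h0k]
      have h2 : (-1 : ℤ) < j0 := by exact_mod_cast h1
      omega
    have hj0le : j0 ≤ (N : ℤ) := by
      have h1 : (j0 : ℝ) < (N : ℝ) + 1 := by nlinarith [mul_lt_mul_of_pos_left h1k hN0]
      have h2 : j0 < (N : ℤ) + 1 := by exact_mod_cast h1
      omega
    have key : ∀ j : ℤ, 0 ≤ j → j ≤ (N : ℤ) - 1 →
        distT (θ k) ((j : ℝ) / (N : ℝ)) ≤ 1 / (2 * (N : ℝ)) →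
        ∃ j : ℤ, 0 ≤ j ∧ j ≤ (N : ℤ) - 1 ∧
          tauC / (M : ℝ) - ε / (M : ℝ) ≤ phat j ∧
          distT ((j : ℝ) / (N : ℝ)) (θ k) ≤ 1 / (N : ℝ) := by
      intro j h0 h1 hd
      refine ⟨j, h0, h1, hC j (pdist_ge hMpos hNpos θ j hk hd), ?_⟩
      rw [distT_symm]
      linarith
    rcases eq_or_lt_of_le hj0le with he | hlt
    · refine key 0 le_rfl (by omega) ?_
      have hjN : (j0 : ℝ) = (N : ℝ) := by exact_mod_cast he
      have hcast : θ k - ((0 : ℤ) : ℝ) / (N : ℝ) - ((1 : ℤ) : ℝ)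
          = ((N : ℝ) * θ k - (j0 : ℝ)) / (N : ℝ) := by
        rw [hjN]; push_cast; field_simp; try ring
      calc distT (θ k) (((0 : ℤ) : ℝ) / (N : ℝ))
          ≤ |θ k - ((0 : ℤ) : ℝ) / (N : ℝ) - ((1 : ℤ) : ℝ)| := distT_le _ _ _
        _ = |(N : ℝ) * θ k - (j0 : ℝ)| / (N : ℝ) := by rw [hcast, abs_div, abs_of_pos hN0]
        _ ≤ (1 / 2) / (N : ℝ) := by gcongr
        _ = 1 / (2 * (N : ℝ)) := by ring
    · refine key j0 hj0nonneg (by omega) ?_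
      have hcast : θ k - (j0 : ℝ) / (N : ℝ) - ((0 : ℤ) : ℝ)
          = ((N : ℝ) * θ k - (j0 : ℝ)) / (N : ℝ) := by
        push_cast; field_simp; try ring
      calc distT (θ k) ((j0 : ℝ) / (N : ℝ))
          ≤ |θ k - (j0 : ℝ) / (N : ℝ) - ((0 : ℤ) : ℝ)| := distT_le _ _ _
        _ = |(N : ℝ) * θ k - (j0 : ℝ)| / (N : ℝ) := by rw [hcast, abs_div, abs_of_pos hN0]
        _ ≤ (1 / 2) / (N : ℝ) := by gcongr
        _ = 1 / (2 * (N : ℝ)) := by ring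
  · -- part (2)
    intro j h1 h2 h3
    obtain ⟨k1, hk1, hd1⟩ := hdet (j - 1) h1
    obtain ⟨k2, hk2, hd2⟩ := hdet j h2
    obtain ⟨k3, hk3, hd3⟩ := hdet (j + 1) h3
    have e12 : k1 = k2 :=
      hsame _ _ k1 k2 hk1 hk2 hd1 hd2 (hstep1 (j - 1) j (by ring))
    have e32 : k3 = k2 := by
      refine (hsame _ _ k2 k3 hk2 hk3 hd2 hd3 (hstep1 j (j + 1) rfl)).symm
    rw [e12] at hd1
    rw [e32] at hd3
    set A1 := ((j - 1 : ℤ) : ℝ) / (N : ℝ) with hA1def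
    set A3 := ((j + 1 : ℤ) : ℝ) / (N : ℝ) with hA3def
    set r1 := round (θ k2 - A1) with hr1def
    set r3 := round (θ k2 - A3) with hr3def
    have hδ1 : |θ k2 - A1 - (r1 : ℝ)| ≤ 1 / (N : ℝ) := by rw [← distT_eq]; exact hd1
    have hδ3 : |θ k2 - A3 - (r3 : ℝ)| ≤ 1 / (N : ℝ) := by rw [← distT_eq]; exact hd3
    obtain ⟨ha1, hb1⟩ := abs_le.mp hδ1
    obtain ⟨ha3, hb3⟩ := abs_le.mp hδ3
    have hA : A3 - A1 = 2 / (N : ℝ) := by rw [hA1def, hA3def]; push_cast; ring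
    have h2N' : 2 / (N : ℝ) = 1 / (N : ℝ) + 1 / (N : ℝ) := by ring
    have ht0 : r3 = r1 := by
      have hup' : r3 ≤ r1 := by
        exact_mod_cast (by linarith [hb1, ha3, hA, h2N'] : (r3 : ℝ) ≤ (r1 : ℝ))
      have hlo' : r1 - 1 < r3 := by
        exact_mod_cast (by linarith [ha1, hb3, hA, h2N', h18, h28] : (r1 : ℝ) - 1 < (r3 : ℝ))
      omega
    have hr3r : (r3 : ℝ) = (r1 : ℝ) := by exact_mod_cast ht0
    have hδ3v : θ k2 - A3 - (r3 : ℝ) = -(1 / (N : ℝ)) := by linarith [h2N']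
    have hA3j : A3 = (j : ℝ) / (N : ℝ) + 1 / (N : ℝ) := by rw [hA3def]; push_cast; ring
    have hθeq : θ k2 = (j : ℝ) / (N : ℝ) + (r3 : ℝ) := by linarith
    have hfar : ∀ (j' : ℤ), (((j' : ℝ) / (N : ℝ) - (j : ℝ) / (N : ℝ)) = 2 / (N : ℝ) ∨
        ((j' : ℝ) / (N : ℝ) - (j : ℝ) / (N : ℝ)) = -(2 / (N : ℝ))) →
        phat j' < tauC / (M : ℝ) - ε / (M : ℝ) := by
      intro j' hj'
      have hpre : ∀ l, l < M → 1 / (N : ℝ) < distT (θ l) ((j' : ℝ) / (N : ℝ)) := by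
        intro l hl
        by_cases hlk : l = k2
        · subst hlk
          apply haux _ _ r3
          have e : θ l - (j' : ℝ) / (N : ℝ) - (r3 : ℝ)
              = -((j' : ℝ) / (N : ℝ) - (j : ℝ) / (N : ℝ)) := by
            rw [hθeq]; ring
          rcases hj' with h | h
          · rw [e, h, abs_neg, abs_of_pos (by positivity)]
          · rw [e, h, neg_neg, abs_of_pos (by positivity)]
        · have hp := hpair l k2 hl hk2 hlk
          have hclose : distT (θ k2) ((j' : ℝ) / (N : ℝ)) ≤ 2 / (N : ℝ) := by
            have h := distT_le (θ k2) ((j' : ℝ) / (N : ℝ)) r3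
            have e : θ k2 - (j' : ℝ) / (N : ℝ) - (r3 : ℝ)
                = -((j' : ℝ) / (N : ℝ) - (j : ℝ) / (N : ℝ)) := by rw [hθeq]; ring
            rcases hj' with hh | hh
            · rw [e, hh, abs_neg, abs_of_pos (by positivity)] at h; exact h
            · rw [e, hh, neg_neg, abs_of_pos (by positivity)] at h; exact h
          have t1 := distT_triangle (θ l) ((j' : ℝ) / (N : ℝ)) (θ k2)
          have e2 : distT ((j' : ℝ) / (N : ℝ)) (θ k2) = distT (θ k2) ((j' : ℝ) / (N : ℝ)) :=
            distT_symm _ _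
          rw [e2] at t1
          have h3N' : 3 / (N : ℝ) = 1 / (N : ℝ) + 2 / (N : ℝ) := by ring
          linarith
      linarith [hD j' hpre]
    refine ⟨⟨k2, hk2, r3, hθeq⟩, ?_, ?_⟩
    · exact hfar (j - 2) (Or.inr (by push_cast; ring))
    · exact hfar (j + 2) (Or.inl (by push_cast; ring))
  · -- part (3)
    intro j h1 h2 _ _
    obtain ⟨k1, hk1, hd1⟩ := hdet j h1
    obtain ⟨k2, hk2, hd2⟩ := hdet (j + 1) h2
    have e12 : k1 = k2 :=
      hsame _ _ k1 k2 hk1 hk2 hd1 hd2 (hstep1 j (j + 1) rfl)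
    rw [e12] at hd1
    set A1 := (j : ℝ) / (N : ℝ) with hA1def
    set A2 := ((j + 1 : ℤ) : ℝ) / (N : ℝ) with hA2def
    set r1 := round (θ k2 - A1) with hr1def
    set r2 := round (θ k2 - A2) with hr2def
    have hδ1 : |θ k2 - A1 - (r1 : ℝ)| ≤ 1 / (N : ℝ) := by rw [← distT_eq]; exact hd1
    have hδ2 : |θ k2 - A2 - (r2 : ℝ)| ≤ 1 / (N : ℝ) := by rw [← distT_eq]; exact hd2
    obtain ⟨ha1, hb1⟩ := abs_le.mp hδ1
    obtain ⟨ha2, hb2⟩ := abs_le.mp hδ2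
    have hA : A2 - A1 = 1 / (N : ℝ) := by rw [hA1def, hA2def]; push_cast; ring
    have ht0 : r2 = r1 := by
      have hup' : r2 < r1 + 1 := by
        exact_mod_cast (by linarith [hb1, ha2, hA, h18] : (r2 : ℝ) < (r1 : ℝ) + 1)
      have hlo' : r1 - 1 < r2 := by
        exact_mod_cast (by linarith [ha1, hb2, hA, h18] : (r1 : ℝ) - 1 < (r2 : ℝ))
      omega
    have hr2r : (r2 : ℝ) = (r1 : ℝ) := by exact_mod_cast ht0
    refine ⟨k2, hk2, -r1, ?_⟩
    have he : ((j : ℝ) + 1) / (N : ℝ) = A1 + 1 / (N : ℝ) := by rw [hA1def]; ring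
    have hcast : ((-r1 : ℤ) : ℝ) = -(r1 : ℝ) := by push_cast; ring
    rw [Set.mem_Icc, hcast, he]
    constructor
    · linarith
    · linarith
  · -- part (4)
    intro j h0 hm1 hp1
    obtain ⟨k, hk, hd⟩ := hdet j h0
    refine ⟨k, hk, ?_⟩
    by_contra hcon
    push_neg at hcon
    set r := round (θ k - (j : ℝ) / (N : ℝ)) with hrdef
    have hδeq : distT (θ k) ((j : ℝ) / (N : ℝ)) = |θ k - (j : ℝ) / (N : ℝ) - (r : ℝ)| :=
      distT_eq _ _
    rw [hδeq] at hd hcon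
    rcases abs_cases (θ k - (j : ℝ) / (N : ℝ) - (r : ℝ)) with ⟨habs, hsgn⟩ | ⟨habs, hsgn⟩
    · -- positive side: j+1 is close
      rw [habs] at hd hcon
      have hstep : distT (θ k) (((j + 1 : ℤ) : ℝ) / (N : ℝ)) ≤ 1 / (2 * (N : ℝ)) := by
        have h1 := distT_le (θ k) (((j + 1 : ℤ) : ℝ) / (N : ℝ)) r
        have e : θ k - ((j + 1 : ℤ) : ℝ) / (N : ℝ) - (r : ℝ)
            = (θ k - (j : ℝ) / (N : ℝ) - (r : ℝ)) - 1 / (N : ℝ) := by push_cast; ring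
        rw [e, abs_of_nonpos (by linarith)] at h1
        have hhalf : 1 / (2 * (N : ℝ)) + 1 / (2 * (N : ℝ)) = 1 / (N : ℝ) := by
          rw [← add_div, show (1:ℝ) + 1 = 2 * 1 by norm_num,
            mul_div_mul_left 1 (N : ℝ) two_ne_zero]
        linarith
      have := hC (j + 1) (pdist_ge hMpos hNpos θ (j + 1) hk hstep)
      linarith
    · -- negative side: j-1 is close
      rw [habs] at hd hcon
      have hstep : distT (θ k) (((j - 1 : ℤ) : ℝ) / (N : ℝ)) ≤ 1 / (2 * (N : ℝ)) := by
        have h1 := distT_le (θ k) (((j - 1 : ℤ) : ℝ) / (N : ℝ)) r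
        have e : θ k - ((j - 1 : ℤ) : ℝ) / (N : ℝ) - (r : ℝ)
            = (θ k - (j : ℝ) / (N : ℝ) - (r : ℝ)) + 1 / (N : ℝ) := by push_cast; ring
        rw [e, abs_of_nonneg (by linarith)] at h1
        have hhalf : 1 / (2 * (N : ℝ)) + 1 / (2 * (N : ℝ)) = 1 / (N : ℝ) := by
          rw [← add_div, show (1:ℝ) + 1 = 2 * 1 by norm_num,
            mul_div_mul_left 1 (N : ℝ) two_ne_zero]
        linarith
      have := hC (j - 1) (pdist_ge hMpos hNpos θ (j - 1) hk hstep)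
      linarith
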